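/- Let X be a real Banach space and let c ≥ 1. If X is c-Schur, then X has the c-strong Schur property. -/

import Mathlib

open scoped BigOperators
open Filter

/-- `ca` of a real sequence: `inf_n sup {|t_k - t_l| : k, l ≥ n}`. -/
noncomputable def caSeqR (t : ℕ → ℝ) : ℝ :=
  sInf {s | ∃ n : ℕ, s = sSup {u | ∃ k, n ≤ k ∧ ∃ l, n ≤ l ∧ u = |t k - t l|}}

/-- `ca` of a sequence in a normed space: `inf_n diam {x_k : k ≥ n}`. -/
noncomputable def caSeq {X : Type*} [NormedAddCommGroup X] (x : ℕ → X) : ℝ :=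
  sInf {s | ∃ n : ℕ, s = Metric.diam (x '' Set.Ici n)}

/-- `de` of a sequence: `sup {ca((x*(x_n))_n) : x* ∈ B_{X*}}`. -/
noncomputable def deSeq {X : Type*} [NormedAddCommGroup X] [NormedSpace ℝ X]
    (x : ℕ → X) : ℝ :=
  sSup {t | ∃ φ : X →L[ℝ] ℝ, ‖φ‖ ≤ 1 ∧ t = caSeqR fun n => φ (x n)}

/-- `wca(x_n) = inf {ca((x_{n_k})_k) : (n_k) strictly increasing}`. -/
noncomputable def wcaSeq {X : Type*} [NormedAddCommGroup X] (x : ℕ → X) : ℝ :=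
  sInf {t | ∃ n : ℕ → ℕ, StrictMono n ∧ t = caSeq (x ∘ n)}

/-- `wde(x_n) = inf {de((x_{n_k})_k) : (n_k) strictly increasing}`. -/
noncomputable def wdeSeq {X : Type*} [NormedAddCommGroup X] [NormedSpace ℝ X]
    (x : ℕ → X) : ℝ :=
  sInf {t | ∃ n : ℕ → ℕ, StrictMono n ∧ t = deSeq (x ∘ n)}

/-- A real normed space is `c`-Schur if `ca(x_n) ≤ c · de(x_n)` for every bounded
sequence `(x_n)`. -/
def IsCSchur (X : Type*) [NormedAddCommGroup X] [NormedSpace ℝ X] (c : ℝ) : Prop :=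
  ∀ x : ℕ → X, (∃ C : ℝ, ∀ n, ‖x n‖ ≤ C) → caSeq x ≤ c * deSeq x

/-- A real normed space has the `c`-strong Schur property if every normalized
`δ`-separated sequence admits a subsequence `(2c/δ + ε)`-equivalent to the unit
vector basis of `ℓ¹`. -/
def HasCStrongSchur (X : Type*) [NormedAddCommGroup X] [NormedSpace ℝ X] (c : ℝ) : Prop :=
  ∀ δ : ℝ, 0 < δ → δ ≤ 2 → ∀ ε : ℝ, 0 < ε → ∀ x : ℕ → X,
    (∀ n, ‖x n‖ = 1) → (∀ n m, n ≠ m → δ ≤ ‖x n - x m‖) →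
    ∃ n : ℕ → ℕ, StrictMono n ∧ ∀ (N : ℕ) (a : ℕ → ℝ),
      (2 * c / δ + ε)⁻¹ * ∑ k ∈ Finset.range N, |a k| ≤
        ‖∑ k ∈ Finset.range N, a k • x (n k)‖


/-!
Let `(x_n)` be normalized and `δ`-separated and let `θ = (2c/δ + ε)⁻¹ < δ/(2c)`. Every subsequence
still has `ca ≥ δ`, so by the `c`-Schur property some functional of the dual unit ball oscillates on
it by more than `2θ`. Discretising the possible levels and a hereditary pigeonhole fix one level
`m` such that every infinite set of indices carries a functional that is infinitely often `≥ m + θ`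
and infinitely often `≤ m - θ`. A Rosenthal-type diagonal argument then extracts a subsequence on
which every finite sign pattern is realized by one such functional. Half the difference of the
functionals realizing the signs of `(a_k)` and the opposite signs is a functional of norm `≤ 1`
that is `≥ θ` where `a_k ≥ 0` and `≤ -θ` where `a_k < 0`, whence `‖∑ a_k x_{n_k}‖ ≥ θ ∑ |a_k|`.
-/

open Finset

section Hereditary

variable {α : Type*}

def Hereditarily (P : Set α → Prop) (M : Set α) : Prop :=
  ∀ M' ⊆ M, M'.Infinite → P M'

theorem exists_hereditarily_of_hereditarily_exists {ι : Type*} {P : ι → Set α → Prop}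
    (hP : ∀ i {M M' : Set α}, M ⊆ M' → P i M → P i M') (T : Finset ι) {M₀ : Set α}
    (hM₀ : M₀.Infinite) (h : Hereditarily (fun M => ∃ i ∈ T, P i M) M₀) :
    ∃ i ∈ T, ∃ M ⊆ M₀, M.Infinite ∧ Hereditarily (P i) M := by
  classical
  induction T using Finset.induction_on generalizing M₀ with
  | empty =>
    obtain ⟨i, hi, -⟩ := h M₀ subset_rfl hM₀
    exact absurd hi (notMem_empty i)
  | insert a T _ ih =>
    by_cases ha : ∃ M ⊆ M₀, M.Infinite ∧ Hereditarily (P a) M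
    · exact ⟨a, mem_insert_self a T, ha⟩
    push Not at ha
    obtain ⟨M, hMM₀, hM, hPa⟩ : ∃ M ⊆ M₀, M.Infinite ∧ ¬ P a M := by
      simpa [Hereditarily] using ha M₀ subset_rfl hM₀
    have hT : Hereditarily (fun M' => ∃ i ∈ T, P i M') M := by
      intro M' hM'M hM'
      obtain ⟨i, hi, hPi⟩ := h M' (hM'M.trans hMM₀) hM'
      rcases mem_insert.1 hi with rfl | hi
      · exact absurd (hP i hM'M hPi) hPa
      · exact ⟨i, hi, hPi⟩
    obtain ⟨i, hi, M', hM'M, hM'⟩ := ih hM hT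
    exact ⟨i, mem_insert_of_mem hi, M', hM'M.trans hMM₀, hM'⟩

end Hereditary

section Shattering

variable {Φ : Type*} (S : Φ → Bool → Set ℕ)

def Oscillates (φ : Φ) (M : Set ℕ) : Prop :=
  ∀ b, (M ∩ S φ b).Infinite

def HereditarilyShatters (s : Finset ℕ) (M : Set ℕ) : Prop :=
  M.Infinite ∧ ∀ σ : ℕ → Bool,
    Hereditarily (fun M' => ∃ φ, (∀ k ∈ s, k ∈ S φ (σ k)) ∧ Oscillates S φ M') M

variable {S}

lemma Oscillates.mono {φ : Φ} {M M' : Set ℕ} (h : Oscillates S φ M) (hM : M ⊆ M') :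
    Oscillates S φ M' :=
  fun b => (h b).mono (Set.inter_subset_inter_left _ hM)

theorem HereditarilyShatters.exists_oscillates_of_antitone {s : Finset ℕ} {M : Set ℕ}
    (h : HereditarilyShatters S s M) {n : ℕ → ℕ} {W : ℕ → Set ℕ} (hn : StrictMono n)
    (hW : Antitone W) (hnW : ∀ i, n i ∈ W i) (hWM : W 0 ⊆ M) (σ : ℕ → ℕ → Bool) :
    ∃ i φ, (∀ k ∈ insert (n i) s, k ∈ S φ (σ i k)) ∧ Oscillates S φ (W (i + 1)) := by
  obtain ⟨key, hkey⟩ := Finite.exists_infinite_fiber fun i => ((fun k : s => σ i k), σ i (n i))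
  rw [Set.infinite_coe_iff] at hkey
  obtain ⟨i₀, hi₀⟩ := hkey.nonempty
  have hnM : ∀ I, n '' I ⊆ M := by rintro I _ ⟨i, -, rfl⟩; exact hWM (hW (Nat.zero_le i) (hnW i))
  obtain ⟨φ, hφs, hφ⟩ := h.2 (σ i₀) _ (hnM _) (hkey.image hn.injective.injOn)
  obtain ⟨_, ⟨i₁, hi₁, rfl⟩, hi₁φ⟩ := (hφ key.2).nonempty
  have hkey₁ := (Set.mem_singleton_iff.1 hi₁).trans (Set.mem_singleton_iff.1 hi₀).symm
  refine ⟨i₁, φ, fun k hk => ?_, fun b => ((hφ b).sdiff (Set.finite_Iic (n i₁))).mono ?_⟩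
  · rcases mem_insert.1 hk with rfl | hk
    · rwa [← Set.mem_singleton_iff.1 hi₁] at hi₁φ
    · have hσ : σ i₁ k = σ i₀ k := congrFun (congrArg Prod.fst hkey₁) ⟨k, hk⟩
      exact hσ ▸ hφs k hk
  · rintro _ ⟨⟨⟨j, -, rfl⟩, hj⟩, hji₁⟩
    exact ⟨hW (hn.lt_iff_lt.1 (not_le.1 hji₁)) (hnW j), hj⟩

theorem HereditarilyShatters.exists_insert {s : Finset ℕ} {M : Set ℕ}
    (h : HereditarilyShatters S s M) (b : ℕ) :
    ∃ n > b, ∃ M', HereditarilyShatters S (insert n s) M' := by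
  -- Otherwise every infinite `W ⊆ M` contains some `n > b` with a pattern `σ` on `insert n s` and
  -- an infinite `W' ⊆ W` above `n` on which no realization of `σ` oscillates; iterating this
  -- contradicts `exists_oscillates_of_antitone`.
  by_contra! hcon
  have step : ∀ W : {W : Set ℕ // W ⊆ M ∧ W.Infinite}, ∃ n ∈ W.1, ∃ σ : ℕ → Bool,
      ∃ W' : {W : Set ℕ // W ⊆ M ∧ W.Infinite}, W'.1 ⊆ W.1 ∩ Set.Ioi n ∧
        ∀ φ, (∀ k ∈ insert n s, k ∈ S φ (σ k)) → ¬ Oscillates S φ W'.1 := by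
    rintro ⟨W, hWM, hW⟩
    obtain ⟨n, hnW, hbn⟩ := hW.exists_gt b
    have hWn : (W ∩ Set.Ioi n).Infinite :=
      (hW.sdiff (Set.finite_Iic n)).mono fun k hk => ⟨hk.1, Set.mem_Ioi.2 (not_le.1 hk.2)⟩
    have hdead := hcon n hbn (W ∩ Set.Ioi n)
    simp only [HereditarilyShatters, Hereditarily, not_and, not_forall] at hdead
    obtain ⟨σ, W', hW'W, hW', hσ⟩ := hdead hWn
    exact ⟨n, hnW, σ, ⟨W', hW'W.trans (Set.inter_subset_left.trans hWM), hW'⟩, hW'W,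
      fun φ hφ hosc => hσ ⟨φ, hφ, hosc⟩⟩
  choose n hnW σ next hnext hdead using step
  let W : ℕ → {W : Set ℕ // W ⊆ M ∧ W.Infinite} := fun i => next^[i] ⟨M, subset_rfl, h.1⟩
  have hW : ∀ i, W (i + 1) = next (W i) := fun i => Function.iterate_succ_apply' next i _
  have hW_succ : ∀ i, (W (i + 1)).1 ⊆ (W i).1 ∩ Set.Ioi (n (W i)) := fun i => hW i ▸ hnext _
  obtain ⟨i, φ, hφ, hosc⟩ := h.exists_oscillates_of_antitone (n := fun i => n (W i))
    (W := fun i => (W i).1) (strictMono_nat_of_lt_succ fun i => (hW_succ i (hnW _)).2)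
    (antitone_nat_of_succ_le fun i => (hW_succ i).trans Set.inter_subset_left)
    (fun i => hnW _) subset_rfl fun i => σ (W i)
  exact hdead (W i) φ hφ (hW i ▸ hosc)

theorem exists_strictMono_forall_realizes {M₀ : Set ℕ} (hM₀ : M₀.Infinite)
    (h : Hereditarily (fun M => ∃ φ, Oscillates S φ M) M₀) :
    ∃ n : ℕ → ℕ, StrictMono n ∧
      ∀ (σ : ℕ → Bool) (N : ℕ), ∃ φ, ∀ k ∈ range N, n k ∈ S φ (σ k) := by
  let State := {p : ℕ × Finset ℕ × Set ℕ // HereditarilyShatters S p.2.1 p.2.2}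
  have step : ∀ p : State, ∃ q : State, p.1.1 < q.1.1 ∧ q.1.2.1 = insert q.1.1 p.1.2.1 := by
    rintro ⟨⟨b, s, M⟩, hs⟩
    obtain ⟨n, hbn, M', hM'⟩ := hs.exists_insert b
    exact ⟨⟨(n, insert n s, M'), hM'⟩, hbn, rfl⟩
  choose next hlt hins using step
  let p : ℕ → State := fun i =>
    next^[i] ⟨(0, ∅, M₀), hM₀, fun _ M hM hMi => (h M hM hMi).imp fun _ hφ => ⟨by simp, hφ⟩⟩
  have hp : ∀ i, p (i + 1) = next (p i) := fun i => Function.iterate_succ_apply' next i _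
  let n : ℕ → ℕ := fun k => (p (k + 1)).1.1
  have hn : StrictMono n := strictMono_nat_of_lt_succ fun k => by
    simp only [n, hp (k + 1)]
    exact hlt _
  have hs : ∀ N, (p N).1.2.1 = (range N).image n := by
    intro N
    induction N with
    | zero => rfl
    | succ N ih => rw [range_add_one, image_insert, ← ih, hp, hins, ← hp]
  refine ⟨n, hn, fun σ N => ?_⟩
  obtain ⟨φ, hφ, -⟩ := (p N).2.2 (Function.extend n σ fun _ => true) _ subset_rfl (p N).2.1
  refine ⟨φ, fun k hk => ?_⟩
  have := hφ (n k) (by rw [hs]; exact mem_image_of_mem n hk)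
  rwa [hn.injective.extend_apply] at this

end Shattering

lemma exists_add_nat_mul_mem_Icc {a b u v η : ℝ} (hη : 0 < η) (hv : a ≤ v) (hvu : v + η ≤ u)
    (hu : u ≤ b) : ∃ j < ⌊(b - a) / η⌋₊ + 1, a + j * η ∈ Set.Icc v u := by
  set j := ⌈(v - a) / η⌉₊
  have hj_ge : v - a ≤ j * η := (div_le_iff₀ hη).1 (Nat.le_ceil _)
  have hj_lt : j * η < v - a + η := by
    have := mul_lt_mul_of_pos_right (Nat.ceil_lt_add_one (div_nonneg (sub_nonneg.2 hv) hη.le)) hη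
    rwa [add_mul, div_mul_cancel₀ _ hη.ne', one_mul] at this
  exact ⟨j, Nat.lt_add_one_iff.2 (Nat.le_floor ((le_div_iff₀ hη).2 (by linarith))), by linarith,
    by linarith⟩

lemma exists_level_infinite_above_infinite_below {t : ℕ → ℝ} {a b θ η : ℝ} (hθ : 0 ≤ θ) (hη : 0 < η)
    (ht : ∀ k, t k ∈ Set.Icc a b) (hosc : ∀ N, ∃ k ≥ N, ∃ l ≥ N, 2 * θ + η < t k - t l) :
    ∃ j < ⌊(b - a) / η⌋₊ + 1,
      {k | a + j * η + θ ≤ t k}.Infinite ∧ {k | t k ≤ a + j * η - θ}.Infinite := by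
  choose K hK L hL hKL using hosc
  have hgrid : ∀ N, ∃ j < ⌊(b - a) / η⌋₊ + 1, a + j * η ∈ Set.Icc (t (L N) + θ) (t (K N) - θ) :=
    fun N => exists_add_nat_mul_mem_Icc hη (by linarith [(ht (L N)).1]) (by linarith [hKL N])
      (by linarith [(ht (K N)).2])
  choose j hj hjN using hgrid
  obtain ⟨j₀, hj₀⟩ := Finite.exists_infinite_fiber fun N => (⟨j N, hj N⟩ : Fin (⌊(b - a) / η⌋₊ + 1))
  rw [Set.infinite_coe_iff] at hj₀
  have hfiber : ∀ N₀, ∃ N > N₀, j N = j₀ := fun N₀ =>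
    (hj₀.exists_gt N₀).imp fun N ⟨hN, hN₀⟩ => ⟨hN₀, congrArg Fin.val hN⟩
  refine ⟨j₀, j₀.2, Set.infinite_of_forall_exists_gt fun N₀ => ?_,
    Set.infinite_of_forall_exists_gt fun N₀ => ?_⟩
  · obtain ⟨N, hN₀, hN⟩ := hfiber N₀
    exact ⟨K N, by simp only [Set.mem_ofPred_eq, ← hN]; linarith [(hjN N).2], hN₀.trans_le (hK N)⟩
  · obtain ⟨N, hN₀, hN⟩ := hfiber N₀
    exact ⟨L N, by simp only [Set.mem_ofPred_eq, ← hN]; linarith [(hjN N).1], hN₀.trans_le (hL N)⟩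

section Schur

variable {X : Type*} [NormedAddCommGroup X]

lemma le_caSeq_of_pairwise_le_norm_sub {x : ℕ → X} {δ : ℝ} (hx : ∃ C, ∀ n, ‖x n‖ ≤ C)
    (hsep : Pairwise fun n m => δ ≤ ‖x n - x m‖) : δ ≤ caSeq x := by
  obtain ⟨C, hC⟩ := hx
  refine le_csInf ⟨_, 0, rfl⟩ ?_
  rintro _ ⟨N, rfl⟩
  have hb : Bornology.IsBounded (x '' Set.Ici N) :=
    isBounded_iff_forall_norm_le.2 ⟨C, by rintro _ ⟨k, -, rfl⟩; exact hC k⟩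
  calc δ ≤ dist (x N) (x (N + 1)) := by rw [dist_eq_norm]; exact hsep (by omega)
    _ ≤ _ := Metric.dist_le_diam_of_mem hb (Set.mem_image_of_mem _ (Set.mem_Ici.2 le_rfl))
        (Set.mem_image_of_mem _ (Set.mem_Ici.2 (Nat.le_succ N)))

variable [NormedSpace ℝ X]

lemma exists_lt_caSeqR_of_lt_deSeq {x : ℕ → X} {r : ℝ} (h : r < deSeq x) :
    ∃ φ : X →L[ℝ] ℝ, ‖φ‖ ≤ 1 ∧ r < caSeqR fun n => φ (x n) := by
  obtain ⟨_, ⟨φ, hφ, rfl⟩, hr⟩ := exists_lt_of_lt_csSup (by exact ⟨_, 0, by simp, rfl⟩) h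
  exact ⟨φ, hφ, hr⟩

lemma exists_lt_sub_of_lt_caSeqR {t : ℕ → ℝ} {r : ℝ} (h : r < caSeqR t) (N : ℕ) :
    ∃ k ≥ N, ∃ l ≥ N, r < t k - t l := by
  -- no boundedness is needed: an unbounded tail has junk supremum `0`, and neither
  -- `Real.sSup_nonneg` nor `exists_lt_of_lt_csSup` asks for an upper bound
  have hN : caSeqR t ≤ sSup {u | ∃ k, N ≤ k ∧ ∃ l, N ≤ l ∧ u = |t k - t l|} :=
    csInf_le ⟨0, by
      rintro _ ⟨n, rfl⟩
      exact Real.sSup_nonneg (by rintro _ ⟨k, -, l, -, rfl⟩; positivity)⟩ ⟨N, rfl⟩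
  obtain ⟨_, ⟨k, hk, l, hl, rfl⟩, hr⟩ :=
    exists_lt_of_lt_csSup (by exact ⟨0, N, le_rfl, N, le_rfl, by simp⟩) (h.trans_le hN)
  rcases lt_abs.1 hr with hr | hr
  · exact ⟨k, hk, l, hl, hr⟩
  · exact ⟨l, hl, k, hk, by linarith⟩

theorem IsCSchur.exists_frequently_lt_sub {c δ r : ℝ} (h : IsCSchur X c) (hc : 0 < c)
    {x : ℕ → X} (hx : ∃ C, ∀ n, ‖x n‖ ≤ C) (hsep : Pairwise fun n m => δ ≤ ‖x n - x m‖)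
    (hr : r < δ / c) :
    ∃ φ : X →L[ℝ] ℝ, ‖φ‖ ≤ 1 ∧ ∀ N, ∃ k ≥ N, ∃ l ≥ N, r < φ (x k) - φ (x l) := by
  have hde : r < deSeq x := lt_of_mul_lt_mul_left
    (((lt_div_iff₀' hc).1 hr).trans_le ((le_caSeq_of_pairwise_le_norm_sub hx hsep).trans (h x hx)))
    hc.le
  obtain ⟨φ, hφ, hlt⟩ := exists_lt_caSeqR_of_lt_deSeq hde
  exact ⟨φ, hφ, exists_lt_sub_of_lt_caSeqR hlt⟩

def levelSide (x : ℕ → X) (m θ : ℝ) (φ : {φ : X →L[ℝ] ℝ // ‖φ‖ ≤ 1}) (b : Bool) : Set ℕ :=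
  {k | cond b (m + θ ≤ φ.1 (x k)) (φ.1 (x k) ≤ m - θ)}

theorem IsCSchur.exists_level_oscillates {c δ θ η : ℝ} (h : IsCSchur X c) (hc : 0 < c)
    {x : ℕ → X} (hx : ∀ n, ‖x n‖ ≤ 1) (hsep : Pairwise fun n m => δ ≤ ‖x n - x m‖)
    (hθ : 0 ≤ θ) (hη : 0 < η) (hθη : 2 * θ + η < δ / c) {M : Set ℕ} (hM : M.Infinite) :
    ∃ j ∈ range (⌊2 / η⌋₊ + 1), ∃ φ : {φ : X →L[ℝ] ℝ // ‖φ‖ ≤ 1},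
      Oscillates (levelSide x (-1 + j * η) θ) φ M := by
  set e := Nat.nth (· ∈ M)
  have he : StrictMono e := Nat.nth_strictMono hM
  obtain ⟨φ, hφ, hosc⟩ := h.exists_frequently_lt_sub hc (x := x ∘ e) ⟨1, fun n => hx _⟩
    (hsep.comp_of_injective he.injective) hθη
  have ht : ∀ k, φ (x (e k)) ∈ Set.Icc (-1) 1 := fun k =>
    abs_le.1 <| (φ.le_opNorm _).trans <| mul_le_one₀ hφ (norm_nonneg _) (hx _)
  obtain ⟨j, hj, hup, hlow⟩ := exists_level_infinite_above_infinite_below hθ hη ht hosc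
  have hmem : ∀ A : Set ℕ, e '' A ⊆ M := by
    rintro A _ ⟨k, -, rfl⟩
    exact Nat.nth_mem_of_infinite hM k
  refine ⟨j, mem_range.2 (by rwa [show (1 : ℝ) - -1 = 2 by norm_num] at hj), ⟨φ, hφ⟩, ?_⟩
  rintro (_ | _)
  · exact (hlow.image he.injective.injOn).mono fun _ hk => ⟨hmem _ hk, by
      obtain ⟨k, hk, rfl⟩ := hk; exact hk⟩
  · exact (hup.image he.injective.injOn).mono fun _ hk => ⟨hmem _ hk, by
      obtain ⟨k, hk, rfl⟩ := hk; exact hk⟩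

lemma mul_sum_abs_le_norm_sum {ψ : X →L[ℝ] ℝ} (hψ : ‖ψ‖ ≤ 1) {y : ℕ → X} {θ : ℝ}
    {s : Finset ℕ} {a : ℕ → ℝ} (h : ∀ k ∈ s, θ * |a k| ≤ a k * ψ (y k)) :
    θ * ∑ k ∈ s, |a k| ≤ ‖∑ k ∈ s, a k • y k‖ :=
  calc θ * ∑ k ∈ s, |a k| ≤ ∑ k ∈ s, a k * ψ (y k) := by rw [mul_sum]; exact sum_le_sum h
    _ = ψ (∑ k ∈ s, a k • y k) := by simp [map_sum, map_smul]
    _ ≤ ‖ψ‖ * ‖∑ k ∈ s, a k • y k‖ := (le_abs_self _).trans (ψ.le_opNorm _)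
    _ ≤ ‖∑ k ∈ s, a k • y k‖ := mul_le_of_le_one_left (norm_nonneg _) hψ

lemma exists_mul_abs_le_of_forall_levelSide {y : ℕ → X} {m θ : ℝ} {s : Finset ℕ}
    (h : ∀ σ : ℕ → Bool, ∃ φ, ∀ k ∈ s, k ∈ levelSide y m θ φ (σ k))
    (a : ℕ → ℝ) : ∃ ψ : X →L[ℝ] ℝ, ‖ψ‖ ≤ 1 ∧ ∀ k ∈ s, θ * |a k| ≤ a k * ψ (y k) := by
  obtain ⟨⟨φ₁, hφ₁⟩, h₁⟩ := h fun k => decide (0 ≤ a k)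
  obtain ⟨⟨φ₂, hφ₂⟩, h₂⟩ := h fun k => !decide (0 ≤ a k)
  -- the common level `m` cancels in the difference
  refine ⟨(2⁻¹ : ℝ) • (φ₁ - φ₂), ?_, fun k hk => ?_⟩
  · rw [norm_smul, Real.norm_of_nonneg (by norm_num)]
    linarith [norm_sub_le φ₁ φ₂]
  · have h₁k := h₁ k hk
    have h₂k := h₂ k hk
    simp only [levelSide, Set.mem_ofPred_eq] at h₁k h₂k
    simp only [FunLike.coe_smul, FunLike.coe_sub, Pi.smul_apply, Pi.sub_apply, smul_eq_mul]
    by_cases ha : 0 ≤ a k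
    · simp only [ha, decide_true, cond_true, Bool.not_true, cond_false] at h₁k h₂k
      rw [abs_of_nonneg ha]
      nlinarith
    · simp only [ha, decide_false, cond_false, Bool.not_false, cond_true] at h₁k h₂k
      rw [abs_of_neg (not_le.1 ha)]
      nlinarith

end Schur

theorem hasCStrongSchur_of_isCSchur_general
    (X : Type*) [NormedAddCommGroup X] [NormedSpace ℝ X]
    (c : ℝ) (hc : 1 ≤ c) (h : IsCSchur X c) :
    HasCStrongSchur X c := by
  intro δ hδ _ ε hε x hx hsep
  have hc₀ : 0 < c := by linarith
  set θ := (2 * c / δ + ε)⁻¹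
  have hθ : 0 < θ := by positivity
  have h2θ : 2 * θ < δ / c := by
    have : θ < (2 * c / δ)⁻¹ := inv_strictAnti₀ (by positivity) (by linarith)
    calc 2 * θ < 2 * (2 * c / δ)⁻¹ := by linarith
      _ = δ / c := by field_simp
  obtain ⟨η, hη, hθη⟩ : ∃ η > 0, 2 * θ + η < δ / c :=
    ⟨(δ / c - 2 * θ) / 2, by linarith, by linarith⟩
  obtain ⟨j, -, M₀, -, hM₀, hj⟩ := exists_hereditarily_of_hereditarily_exists
    (P := fun (j : ℕ) M => ∃ φ, Oscillates (levelSide x (-1 + j * η) θ) φ M)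
    (fun _ _ _ hMM' ⟨φ, hφ⟩ => ⟨φ, hφ.mono hMM'⟩) _ Set.infinite_univ
    fun M _ hM => h.exists_level_oscillates hc₀ (fun n => (hx n).le) (fun n m => hsep n m)
      hθ.le hη hθη hM
  obtain ⟨n, hn, hpat⟩ := exists_strictMono_forall_realizes hM₀ hj
  refine ⟨n, hn, fun N a => ?_⟩
  obtain ⟨ψ, hψ, hψa⟩ := exists_mul_abs_le_of_forall_levelSide (y := x ∘ n) (s := range N)
    (fun σ => hpat σ N) a
  exact mul_sum_abs_le_norm_sum hψ hψa

/-- If a real Banach space is `c`-Schur, then it has the `c`-strong Schur property. -/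
theorem hasCStrongSchur_of_isCSchur
    (X : Type*) [NormedAddCommGroup X] [NormedSpace ℝ X] [CompleteSpace X]
    (c : ℝ) (hc : 1 ≤ c) (h : IsCSchur X c) :
    HasCStrongSchur X c :=
  hasCStrongSchur_of_isCSchur_general X c hc h
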